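/- Let R = ℤ_{p^k}[t^±], A = R/(p) ≅ ℤ_p[t^±], and let M be a finitely generated torsion-free R-module. Then the p-torsion filtration 0 = M⁰ ⊂ M¹ ⊂ ⋯ ⊂ M^k = M, where M^s = {x ∈ M : p^s x = 0}, has all quotients M^s/M^{s−1} free as A-modules. -/

import Mathlib

/-!
Each quotient `M^{s+1} / M^s` is killed by `p`, so it is a module over `R / (p) ≅ 𝔽_p[t^±]`,
a principal ideal domain, and it is finitely generated because `R` is Noetherian. It is also
torsion-free over `R / (p)`: a Laurent polynomial `f` not divisible by `p` has a coefficient prime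
to `p`, hence a unit of `ℤ / p^k`, so `f` is a non-zero-divisor of `R` by McCoy's theorem; and if
`f x ∈ M^s` then `f (p^s x) = 0`, whence `p^s x = 0` by torsion-freeness of `M`.
-/

namespace Stmt11

/-- `R = ℤ_{p^k}[t^±]`. -/
abbrev Rk (p k : ℕ) := LaurentPolynomial (ZMod (p ^ k))

/-- The `s`-th step `M^s = {x ∈ M : p^s x = 0}` of the `p`-torsion filtration. -/
noncomputable def Ms (p k : ℕ) (M : Type*) [AddCommGroup M] [Module (Rk p k) M] (s : ℕ) :
    Submodule (Rk p k) M :=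
  LinearMap.ker (((p : Rk p k) ^ s) • (LinearMap.id : M →ₗ[Rk p k] M))

/-- The subquotient `M_s = M^s / M^{s-1}`. -/
abbrev Qs (p k : ℕ) (M : Type*) [AddCommGroup M] [Module (Rk p k) M] (s : ℕ) :=
  Ms p k M s ⧸ (Submodule.comap (Ms p k M s).subtype (Ms p k M (s - 1)))

end Stmt11

open LaurentPolynomial nonZeroDivisors

theorem IsLocalization.isPrincipalIdealRing {R S : Type*} [CommRing R] [CommRing S] [Algebra R S]
    (M : Submonoid R) [IsLocalization M S] [IsPrincipalIdealRing R] :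
    IsPrincipalIdealRing S where
  principal J := by
    obtain ⟨a, ha⟩ := IsPrincipalIdealRing.principal (J.comap (algebraMap R S))
    refine ⟨algebraMap R S a, ?_⟩
    rw [← IsLocalization.map_under M S J, Ideal.under_def, ha, Ideal.submodule_span_eq,
      Ideal.map_span, Set.image_singleton]

namespace LaurentPolynomial

variable {R S : Type*} [CommRing R] [CommRing S]

instance {K : Type*} [Field K] : IsPrincipalIdealRing K[T;T⁻¹] :=
  IsLocalization.isPrincipalIdealRing (Submonoid.powers (Polynomial.X : Polynomial K))

instance [IsNoetherianRing R] : IsNoetherianRing R[T;T⁻¹] :=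
  IsLocalization.isNoetherianRing (Submonoid.powers (Polynomial.X : Polynomial R)) _ inferInstance

theorem C_dvd_iff_dvd_coeff {a : R} {f : R[T;T⁻¹]} : C a ∣ f ↔ ∀ n, a ∣ f.coeff n := by
  constructor
  · rintro ⟨g, rfl⟩ n
    rw [← single_eq_C, AddMonoidAlgebra.coeff_single_zero_mul]
    exact dvd_mul_right a _
  · intro h
    rw [← AddMonoidAlgebra.sum_coeff_single f]
    refine Finset.dvd_sum fun n _ => ?_
    obtain ⟨b, hb⟩ := h n
    rw [hb, single_eq_C_mul_T, map_mul, mul_assoc]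
    exact dvd_mul_right _ _

theorem ker_mapRingHom {φ : R →+* S} {a : R} (hφ : RingHom.ker φ = Ideal.span {a}) :
    RingHom.ker (AddMonoidAlgebra.mapRingHom ℤ φ) = Ideal.span {C a} := by
  ext f
  rw [RingHom.mem_ker, Ideal.mem_span_singleton, C_dvd_iff_dvd_coeff, LaurentPolynomial.ext_iff]
  simp only [AddMonoidAlgebra.coeff_mapRingHom, AddMonoidAlgebra.coeff_zero, Finsupp.coe_zero,
    Pi.zero_apply, ← RingHom.mem_ker, hφ, Ideal.mem_span_singleton]

open Polynomial in
protected theorem mem_nonZeroDivisors_iff {f : R[T;T⁻¹]} :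
    f ∈ R[T;T⁻¹]⁰ ↔ ∀ a : R, a • f = 0 → a = 0 := by
  refine ⟨fun hf a ha => ?_, fun hf => ?_⟩
  · have hCa : C a = 0 := hf.2 _ (by rwa [← smul_eq_C_mul])
    simpa using congr($hCa |>.coeff 0)
  obtain ⟨n, g, hg⟩ := exists_T_pow f
  have hg_mem : g ∈ R[X]⁰ := Polynomial.mem_nonZeroDivisors_iff.mpr fun a ha => hf a <| by
    have := congr(toLaurent $ha)
    rwa [map_zero, Polynomial.smul_eq_C_mul, map_mul, toLaurent_C, hg, ← mul_assoc,
      ← smul_eq_C_mul, (isUnit_T _).mul_left_eq_zero] at this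
  have : f * T n ∈ R[T;T⁻¹]⁰ := hg ▸
    IsLocalization.map_nonZeroDivisors_le (Submonoid.powers X) _ (Submonoid.mem_map_of_mem _ hg_mem)
  exact (mul_mem_nonZeroDivisors.mp this).1

theorem mem_nonZeroDivisors_of_coeff_mem {f : R[T;T⁻¹]} (n : ℤ) (hf : f.coeff n ∈ R⁰) :
    f ∈ R[T;T⁻¹]⁰ :=
  LaurentPolynomial.mem_nonZeroDivisors_iff.mpr fun a ha =>
    hf.2 a (by simpa [mul_comm] using congr($ha |>.coeff n))

end LaurentPolynomial

namespace ZMod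

theorem ker_castHom {m n : ℕ} (h : m ∣ n) :
    RingHom.ker (castHom h (ZMod m)) = Ideal.span {(m : ZMod n)} := by
  ext c
  rw [RingHom.mem_ker, Ideal.mem_span_singleton]
  constructor
  · intro hc
    obtain ⟨z, rfl⟩ := intCast_surjective c
    rw [map_intCast, intCast_zmod_eq_zero_iff_dvd] at hc
    simpa using map_dvd (Int.castRingHom (ZMod n)) hc
  · rintro ⟨d, rfl⟩
    rw [map_mul, map_natCast, natCast_self, zero_mul]

theorem isUnit_of_not_natCast_dvd {p k : ℕ} (hp : p.Prime) {c : ZMod (p ^ k)}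
    (hc : ¬ (p : ZMod (p ^ k)) ∣ c) : IsUnit c := by
  have : NeZero (p ^ k) := ⟨pow_ne_zero k hp.ne_zero⟩
  rw [← natCast_zmod_val c, isUnit_iff_coprime]
  refine Nat.Coprime.pow_right _ (Nat.Coprime.symm (hp.coprime_iff_not_dvd.mpr fun hdvd => hc ?_))
  simpa using map_dvd (Nat.castRingHom (ZMod (p ^ k))) hdvd

end ZMod

namespace Module

theorem exists_linearEquiv_pi_quotient {R N : Type*} [CommRing R] [AddCommGroup N] [Module R N]
    [Module.Finite R N] [IsTorsionFree R N] {I : Ideal R} [IsDomain (R ⧸ I)]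
    [IsPrincipalIdealRing (R ⧸ I)] (hN : IsTorsionBySet R N I) (hI : ∀ r ∉ I, r ∈ R⁰) :
    ∃ n : ℕ, Nonempty (N ≃ₗ[R] (Fin n → R ⧸ I)) := by
  let _ := hN.module
  have : IsScalarTower R (R ⧸ I) N := hN.isScalarTower
  have : Module.Finite (R ⧸ I) N := Module.Finite.of_restrictScalars_finite R _ _
  have : IsTorsionFree (R ⧸ I) N := .of_smul_eq_zero fun a x hax => by
    obtain ⟨r, rfl⟩ := Ideal.Quotient.mk_surjective a
    by_cases hr : r ∈ I
    · exact .inl (Ideal.Quotient.eq_zero_iff_mem.mpr hr)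
    · rw [IsTorsionBySet.mk_smul] at hax
      have hr : IsRegular r := isRegular_iff_mem_nonZeroDivisors.mpr (hI r hr)
      exact .inr (hr.isSMulRegular.right_eq_zero_of_smul hax)
  obtain ⟨n, b⟩ := basisOfFiniteTypeTorsionFree' (R := R ⧸ I) (M := N)
  exact ⟨n, ⟨b.equivFun.restrictScalars R⟩⟩

end Module

namespace Submodule

variable {R M : Type*} [CommRing R] [AddCommGroup M] [Module R M] (π : R) (s : ℕ)

theorem isTorsionBy_torsionBy_pow_succ_quotient :
    Module.IsTorsionBy R (torsionBy R M (π ^ (s + 1)) ⧸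
      (torsionBy R M (π ^ s)).comap (torsionBy R M (π ^ (s + 1))).subtype) π := by
  intro q
  obtain ⟨⟨x, hx⟩, rfl⟩ := Quotient.mk_surjective _ q
  rw [mem_torsionBy_iff] at hx
  rw [← Quotient.mk_smul, Quotient.mk_eq_zero, mem_comap, mem_torsionBy_iff]
  simpa [smul_smul, ← pow_succ] using hx

theorem isTorsionFree_torsionBy_pow_succ_quotient [Module.IsTorsionFree R M] :
    Module.IsTorsionFree R (torsionBy R M (π ^ (s + 1)) ⧸
      (torsionBy R M (π ^ s)).comap (torsionBy R M (π ^ (s + 1))).subtype) where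
  isSMulRegular r hr := .of_right_eq_zero_of_smul fun q hq => by
    obtain ⟨x, rfl⟩ := Quotient.mk_surjective _ q
    rw [← Quotient.mk_smul, Quotient.mk_eq_zero, mem_comap, mem_torsionBy_iff] at hq
    rw [Quotient.mk_eq_zero, mem_comap, mem_torsionBy_iff]
    rw [map_smul, smul_comm] at hq
    exact hr.isSMulRegular.right_eq_zero_of_smul hq

end Submodule

namespace Stmt11

theorem natCast_pow_self_eq_zero (p k : ℕ) : (p : Rk p k) ^ k = 0 := by
  rw [← Nat.cast_pow, ← map_natCast C, ZMod.natCast_self, map_zero]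

theorem mem_nonZeroDivisors_of_notMem_span {p k : ℕ} (hp : p.Prime) {f : Rk p k}
    (hf : f ∉ Ideal.span {(p : Rk p k)}) : f ∈ (Rk p k)⁰ := by
  rw [Ideal.mem_span_singleton, ← map_natCast C, C_dvd_iff_dvd_coeff, not_forall] at hf
  obtain ⟨n, hn⟩ := hf
  exact mem_nonZeroDivisors_of_coeff_mem n
    (ZMod.isUnit_of_not_natCast_dvd hp hn).mem_nonZeroDivisors

noncomputable def quotientSpanEquiv (p : ℕ) {k : ℕ} (hk : k ≠ 0) :
    Rk p k ⧸ Ideal.span {(p : Rk p k)} ≃+* (ZMod p)[T;T⁻¹] :=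
  (Ideal.quotEquivOfEq <| by
      rw [ker_mapRingHom (ZMod.ker_castHom (dvd_pow_self p hk)), map_natCast]).trans
    (RingHom.quotientKerEquivOfSurjective <|
      AddMonoidAlgebra.map_surjective _ (ZMod.ringHom_surjective _))

theorem stmt11_general (p k : ℕ) (hp : p.Prime)
    (M : Type*) [AddCommGroup M] [Module (Rk p k) M] [Module.Finite (Rk p k) M]
    (htf : ∀ x : M, ∀ r ∈ nonZeroDivisors (Rk p k), r • x = 0 → x = 0) :
    Ms p k M 0 = ⊥ ∧ Ms p k M k = ⊤ ∧
      ∀ s : ℕ, 1 ≤ s → s ≤ k →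
        ∃ r : ℕ, Nonempty
          (Qs p k M s ≃ₗ[Rk p k] (Fin r → (Rk p k ⧸ Ideal.span {(p : Rk p k)}))) := by
  have : Fact p.Prime := ⟨hp⟩
  have : Module.IsTorsionFree (Rk p k) M := ⟨fun r hr =>
    .of_right_eq_zero_of_smul fun x => htf x r (isRegular_iff_mem_nonZeroDivisors.mp hr)⟩
  refine ⟨by ext; simp [Ms], by ext; simp [Ms, natCast_pow_self_eq_zero], fun s hs hsk => ?_⟩
  obtain ⟨j, rfl⟩ := Nat.exists_eq_add_of_le' hs
  let e := quotientSpanEquiv p (k := k) (by omega)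
  have : IsDomain (Rk p k ⧸ Ideal.span {(p : Rk p k)}) := e.toMulEquiv.isDomain _
  have : IsPrincipalIdealRing (Rk p k ⧸ Ideal.span {(p : Rk p k)}) :=
    .of_surjective e.symm.toRingHom e.symm.surjective
  -- `Ms p k M s` is definitionally `Submodule.torsionBy (Rk p k) M (p ^ s)`.
  have : Module.IsTorsionFree (Rk p k) (Qs p k M (j + 1)) :=
    Submodule.isTorsionFree_torsionBy_pow_succ_quotient _ j
  exact Module.exists_linearEquiv_pi_quotient
    ((Module.isTorsionBySet_span_singleton_iff _).mpr
      (Submodule.isTorsionBy_torsionBy_pow_succ_quotient _ j))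
    fun r hr => mem_nonZeroDivisors_of_notMem_span hp hr

/-- Let `R = ℤ_{p^k}[t^±]`, `A = R/(p) ≅ ℤ_p[t^±]`, and let `M` be a
finitely generated torsion-free `R`-module.  Then the `p`-torsion filtration
`0 = M⁰ ⊆ M¹ ⊆ ⋯ ⊆ M^k = M`, `M^s = {x : p^s x = 0}`, has all of its quotients
`M^s / M^{s-1}` free as `A`-modules (i.e. `R`-linearly isomorphic to a finite direct sum of
copies of `A = R / (p)`). -/
theorem stmt11 (p k : ℕ) (hp : p.Prime) (hk : 0 < k)
    (M : Type*) [AddCommGroup M] [Module (Rk p k) M] [Module.Finite (Rk p k) M]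
    (htf : ∀ x : M, ∀ r ∈ nonZeroDivisors (Rk p k), r • x = 0 → x = 0) :
    Ms p k M 0 = ⊥ ∧ Ms p k M k = ⊤ ∧
      ∀ s : ℕ, 1 ≤ s → s ≤ k →
        ∃ r : ℕ, Nonempty
          (Qs p k M s ≃ₗ[Rk p k] (Fin r → (Rk p k ⧸ Ideal.span {(p : Rk p k)}))) :=
  stmt11_general p k hp M htf

end Stmt11
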